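/- arXiv:2302.13642 — 3 statements merged into one kernel-verified Lean document; each statement's English description precedes it below -/
import Mathlib

section
/- Let A(t) = t(t - t_A) and B(t) = (t - t_B)(t - 1) with 0 < t_B < t_A < 1. Then A'(t)B(t) - A(t)B'(t) < 0 for every real t. -/
/-!
For monic quadratics with roots `a, b` and `c, d` the Wronskian `A'B - AB'` expands as
`-((d - b)(t - a)(t - c) + (c - a)(t - b)(t - d))`. When the roots interlace, `a < c < b < d`,
this is a quadratic in `t` with negative leading coefficient and negative discriminant
(Hermite–Kakeya). Here `A` has roots `0, t_A` and `B` has roots `t_B, 1`.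
-/

lemma hasDerivAt_mul_sub_mul_sub (a b t : ℝ) :
    HasDerivAt (fun x => (x - a) * (x - b)) ((t - a) + (t - b)) t :=
  (((hasDerivAt_id' t).sub_const a).fun_mul ((hasDerivAt_id' t).sub_const b)).congr_deriv (by ring)

lemma wronskian_mul_sub_mul_sub (a b c d t : ℝ) :
    ((t - a) + (t - b)) * ((t - c) * (t - d)) - (t - a) * (t - b) * ((t - c) + (t - d)) =
      -((d - b) * ((t - a) * (t - c)) + (c - a) * ((t - b) * (t - d))) := by
  ring

lemma wronskian_mul_sub_mul_sub_neg {a b c d : ℝ} (hac : a < c) (hcb : c < b) (hbd : b < d)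
    (t : ℝ) :
    ((t - a) + (t - b)) * ((t - c) * (t - d)) - (t - a) * (t - b) * ((t - c) + (t - d)) < 0 := by
  rw [wronskian_mul_sub_mul_sub, neg_lt_zero]
  nlinarith [mul_pos (sub_pos.2 hac) (sub_pos.2 hbd), mul_pos (sub_pos.2 hcb) (sub_pos.2 hbd),
    mul_pos (sub_pos.2 hac) (sub_pos.2 hcb), sq_nonneg (t - c), sq_nonneg (t - b)]

theorem stmt_0 (tA tB : ℝ) (h1 : 0 < tB) (h2 : tB < tA) (h3 : tA < 1)
    (A B : ℝ → ℝ)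
    (hA : ∀ t, A t = t * (t - tA)) (hB : ∀ t, B t = (t - tB) * (t - 1)) :
    ∀ t : ℝ, deriv A t * B t - A t * deriv B t < 0 := by
  have hA' : A = fun x => (x - 0) * (x - tA) := funext fun x => by rw [hA, sub_zero]
  have hB' : B = fun x => (x - tB) * (x - 1) := funext hB
  intro t
  rw [hA', hB', (hasDerivAt_mul_sub_mul_sub 0 tA t).deriv,
    (hasDerivAt_mul_sub_mul_sub tB 1 t).deriv]
  exact wronskian_mul_sub_mul_sub_neg h1 h2 h3 t
end

section
/- Let A(t) = t(t - t_A) and B(t) = (t - t_B)(t - 1) with 0 < t_B < t_A < 1, and define P(t) = 4(B(t)A'(t) - B'(t)A(t)) - B(t)^3. Then P(t) < 0 for all t in (0, t_B) ∪ (t_A, 1). -/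
/-!
Here `B A' - B' A` is the quadratic `W t = (t_A - t_B - 1) t² + 2 t_B t - t_A t_B`. Its leading
coefficient is negative and its discriminant `4 t_B (t_B - t_A)(1 - t_A)` too, so `W < 0`
everywhere. On `(0, t_B)` also `B > 0`, so `P = 4 W - B³ < 0`. On `(t_A, 1)` put
`c = -B = (t - t_B)(1 - t) ∈ (0, 1)`; from `-W = (t - t_B)² - (t_A - t_B)(t² - t_B)` one gets
`W < -c²`, hence `P = 4 W + c³ < c² (c - 4) < 0`.
-/

lemma hasDerivAt_sub_mul_sub (p q t : ℝ) :
    HasDerivAt (fun t => (t - p) * (t - q)) ((t - q) + (t - p)) t := by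
  simpa using ((hasDerivAt_id' t).sub_const p).fun_mul ((hasDerivAt_id' t).sub_const q)

/-- The Wronskian `B A' - B' A` of `A t = t (t - a)` and `B t = (t - b) (t - 1)`. -/
def wronskian (a b t : ℝ) : ℝ := (a - b - 1) * t ^ 2 + 2 * b * t - a * b

lemma wronskian_eq (a b t : ℝ) :
    (t - b) * (t - 1) * ((t - a) + (t - 0)) - ((t - 1) + (t - b)) * ((t - 0) * (t - a))
      = wronskian a b t := by
  unfold wronskian; ring

lemma wronskian_neg {a b : ℝ} (hb : 0 < b) (hba : b < a) (ha : a < 1) (t : ℝ) :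
    wronskian a b t < 0 := by
  have hlead : 0 < 1 + b - a := by linarith
  have hdisc : 0 < b * (a - b) * (1 - a) := by
    have := sub_pos.2 hba; have := sub_pos.2 ha; positivity
  have hsq : (1 + b - a) * -wronskian a b t
      = ((1 + b - a) * t - b) ^ 2 + b * (a - b) * (1 - a) := by
    unfold wronskian; ring
  nlinarith [sq_nonneg ((1 + b - a) * t - b)]

lemma wronskian_lt_neg_sq {a b t : ℝ} (hb : 0 < b) (hba : b < a) (hat : a < t) (ht1 : t < 1) :
    wronskian a b t < -((t - b) * (1 - t)) ^ 2 := by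
  have htb : 0 < t - b := by linarith
  have hsq : ((t - b) * (1 - t)) ^ 2 < (t - b) ^ 2 := by
    have : 0 < 1 - t := by linarith
    rw [mul_pow]
    exact mul_lt_of_lt_one_right (by positivity) (by nlinarith)
  have hW : -wronskian a b t = (t - b) ^ 2 - (a - b) * (t ^ 2 - b) := by
    unfold wronskian; ring
  rcases le_or_gt (t ^ 2) b with hle | hgt
  · nlinarith [mul_nonneg (sub_pos.2 hba).le (sub_nonneg.2 hle)]
  · -- `-W > (t - b)² - (t - b)(t² - b) = t c` with `c = (t - b)(1 - t) < t`.
    have htc : t * ((t - b) * (1 - t)) < -wronskian a b t := by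
      nlinarith [mul_lt_mul_of_pos_right (show a - b < t - b by linarith) (sub_pos.2 hgt)]
    have hct : (t - b) * (1 - t) < t := by nlinarith
    nlinarith [mul_lt_mul_of_pos_left hct (mul_pos htb (show 0 < 1 - t by linarith))]

theorem stmt_1 (tA tB : ℝ) (h1 : 0 < tB) (h2 : tB < tA) (h3 : tA < 1)
    (A B P : ℝ → ℝ)
    (hA : ∀ t, A t = t * (t - tA)) (hB : ∀ t, B t = (t - tB) * (t - 1))
    (hP : ∀ t, P t = 4 * (B t * deriv A t - deriv B t * A t) - (B t) ^ 3) :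
    ∀ t ∈ Set.Ioo (0 : ℝ) tB ∪ Set.Ioo tA 1, P t < 0 := by
  intro t ht
  have hA' : A = fun t => (t - 0) * (t - tA) := funext fun t => by rw [hA, sub_zero]
  have hB' : B = fun t => (t - tB) * (t - 1) := funext hB
  have hPW : P t = 4 * wronskian tA tB t - B t ^ 3 := by
    rw [hP, hA', hB', (hasDerivAt_sub_mul_sub 0 tA t).deriv,
      (hasDerivAt_sub_mul_sub tB 1 t).deriv, ← wronskian_eq]
  rw [hPW, hB]
  rcases ht with ⟨ht0, htB⟩ | ⟨htA, ht1⟩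
  · have hBpos : 0 < (t - tB) * (t - 1) := mul_pos_of_neg_of_neg (by linarith) (by linarith)
    nlinarith [wronskian_neg h1 h2 h3 t, pow_pos hBpos 3]
  · set c := (t - tB) * (1 - t) with hc
    have hc0 : 0 < c := mul_pos (by linarith) (by linarith)
    have hc1 : c < 1 := by nlinarith
    have hBc : (t - tB) * (t - 1) = -c := by rw [hc]; ring
    rw [hBc]
    nlinarith [wronskian_lt_neg_sq h1 h2 htA ht1, mul_pos hc0 hc0]
end

section
/- Let 0 < t_B < t_A < 1 (so in particular t_B < 1/2 is not assumed but t_B < 1). With Q as above, Q(t_B) > 0, Q'(t_B) = -10(1 - t_B) t_B (t_A - t_B) < 0, Q''(t_B) = 22 t_B (t_A - t_B) + 2(1 - t_A) > 0, and Q'''(t_B) = -24(1 + t_B - t_A) < 0. -/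
private lemma cubic_deriv (a b c d x : ℝ) :
    HasDerivAt (fun t : ℝ => a * t ^ 3 + b * t ^ 2 + c * t + d)
      (3 * a * x ^ 2 + 2 * b * x + c) x := by
  have h := ((((hasDerivAt_pow 3 x).const_mul a).add
      ((hasDerivAt_pow 2 x).const_mul b)).add
      ((hasDerivAt_id x).const_mul c)).add (hasDerivAt_const x d)
  refine h.congr_deriv ?_
  push_cast; ring

private lemma quad_deriv (b c d x : ℝ) :
    HasDerivAt (fun t : ℝ => b * t ^ 2 + c * t + d) (2 * b * x + c) x := by
  have h := (((hasDerivAt_pow 2 x).const_mul b).add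
      ((hasDerivAt_id x).const_mul c)).add (hasDerivAt_const x d)
  refine h.congr_deriv ?_
  ring

private lemma lin_deriv (c d x : ℝ) :
    HasDerivAt (fun t : ℝ => c * t + d) c x := by
  have h := ((hasDerivAt_id x).const_mul c).add (hasDerivAt_const x d)
  refine h.congr_deriv ?_
  ring

theorem stmt_7 (tA tB : ℝ) (h1 : 0 < tB) (h2 : tB < tA) (h3 : tA < 1)
    (Q : ℝ → ℝ)
    (hQ : ∀ t, Q t = -4 * (1 - tA + tB) * t ^ 3
        + ((tB ^ 2 + 12 * tB + 1) - (1 + tB) * tA) * t ^ 2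
        - 2 * tB * (tB + 4 * tA + 1) * t
        + tB * (3 * tA * (tB + 1) - 2 * tB)) :
    Q tB > 0 ∧
    (deriv Q tB = -10 * (1 - tB) * tB * (tA - tB) ∧ deriv Q tB < 0) ∧
    (deriv (deriv Q) tB = 22 * tB * (tA - tB) + 2 * (1 - tA) ∧
      deriv (deriv Q) tB > 0) ∧
    (deriv (deriv (deriv Q)) tB = -24 * (1 + tB - tA) ∧
      deriv (deriv (deriv Q)) tB < 0) := by
  set a := -4 * (1 - tA + tB)
  set b := (tB ^ 2 + 12 * tB + 1) - (1 + tB) * tA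
  set c := -(2 * tB * (tB + 4 * tA + 1))
  set d := tB * (3 * tA * (tB + 1) - 2 * tB)
  have hQf : Q = fun t => a * t ^ 3 + b * t ^ 2 + c * t + d := by
    funext t; rw [hQ t]; ring
  have hd1 : deriv Q = fun x => 3 * a * x ^ 2 + 2 * b * x + c := by
    funext x; rw [hQf]; exact (cubic_deriv a b c d x).deriv
  have hd2 : deriv (deriv Q) = fun x => 2 * (3 * a) * x + 2 * b := by
    funext x; simp only [hd1]; exact (quad_deriv (3 * a) (2 * b) c x).deriv
  have hd3 : deriv (deriv (deriv Q)) = fun _ => 2 * (3 * a) := by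
    funext x; simp only [hd2]; exact (lin_deriv (2 * (3 * a)) (2 * b) x).deriv
  have hb1 : tB < 1 := h2.trans h3
  refine ⟨?_, ⟨?_, ?_⟩, ⟨?_, ?_⟩, ?_, ?_⟩
  · have : Q tB = 3 * tB * (1 - tB) ^ 2 * (tA - tB) := by rw [hQ tB]; ring
    rw [this]
    have := sub_pos.mpr h2
    have := sub_pos.mpr hb1
    positivity
  · simp only [hd1]; simp only [a, b, c]; ring
  · simp only [hd1]
    have : 3 * a * tB ^ 2 + 2 * b * tB + c = -10 * (1 - tB) * tB * (tA - tB) := by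
      simp only [a, b, c]; ring
    rw [this]
    have h4 := sub_pos.mpr h2
    have h5 := sub_pos.mpr hb1
    nlinarith [mul_pos (mul_pos h5 h1) h4]
  · simp only [hd2]; simp only [a, b]; ring
  · simp only [hd2]
    have : 2 * (3 * a) * tB + 2 * b = 22 * tB * (tA - tB) + 2 * (1 - tA) := by
      simp only [a, b]; ring
    rw [this]
    have h4 := sub_pos.mpr h2
    have h5 := sub_pos.mpr h3
    positivity
  · simp only [hd3]; simp only [a]; ring
  · simp only [hd3]
    have : 2 * (3 * a) = -24 * (1 + tB - tA) := by simp only [a]; ring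
    rw [this]
    linarith
end
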